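/- arXiv:2603.29080 — 2 statements merged into one kernel-verified Lean document; each statement's English description precedes it below -/
import Mathlib

section
/- Suppose there exist a vector v and real numbers a, b such that ⟪v, x_k⟫ = a and ⟪v, y_k⟫ = b for all k = 1,…,N, and suppose Σ_{k=1}^N Q^x(k,i) = 1 for every i and Σ_{k=1}^N Q^y(i,k) = 1 for every i (double stochasticity of Q^x and Q^y). Then for every i, ⟪v, ∇_{y_i}L⟫ = 0 and ⟪v, ∇_{x_i}L⟫ = 0: the gradient of the contrastive loss has no component in the direction v. -/
/-!
Moving `y_i` by `w` changes the logit `-‖x_j - y_k‖² / τ` only for `k = i`, at rate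
`(2/τ) ⟪x_j - y_i, w⟫`, and the derivative of a log-softmax entry is the derivative of its logit
minus the softmax average of all logit derivatives. Hence
`∇_{y_i} L = (2 / (N τ)) (Σ_k (Q^x(k,i) + Q^y(k,i)) (x_k - y_i) - 2 (x_i - y_i))`.
Along `v` every `x_k - y_i` has the same component `a - b`, so `⟪v, ∇_{y_i} L⟫` is a multiple of
`Σ_k Q^x(k,i) + Σ_k Q^y(k,i) - 2`, which vanishes: the first sum is `1` by hypothesis and the
second always is. The case of `x_i` follows from the symmetry `L(x, y) = L(y, x)`, which swaps
`Q^x` and `Q^y`.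
-/

open RealInnerProductSpace

/-- Softmax assignment matrix `Q^x(i,j)` (rows sum to one). -/
noncomputable def Qx {d N : ℕ} (τ : ℝ) (x y : Fin N → EuclideanSpace ℝ (Fin d))
    (i j : Fin N) : ℝ :=
  Real.exp (-‖x i - y j‖ ^ 2 / τ) / ∑ j', Real.exp (-‖x i - y j'‖ ^ 2 / τ)

/-- Softmax assignment matrix `Q^y(i,j)` (columns sum to one). -/
noncomputable def Qy {d N : ℕ} (τ : ℝ) (x y : Fin N → EuclideanSpace ℝ (Fin d))
    (i j : Fin N) : ℝ :=
  Real.exp (-‖x i - y j‖ ^ 2 / τ) / ∑ i', Real.exp (-‖x i' - y j‖ ^ 2 / τ)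

/-- The multimodal contrastive loss
`L = −(1/N) Σ_i (log Q^x(i,i) + log Q^y(i,i))`. -/
noncomputable def contrastiveLoss {d N : ℕ} (τ : ℝ)
    (x y : Fin N → EuclideanSpace ℝ (Fin d)) : ℝ :=
  -(1 / (N : ℝ)) * ∑ i, (Real.log (Qx τ x y i i) + Real.log (Qy τ x y i i))

theorem HasFDerivAt.log_exp_div_sum_exp {ι E : Type*} [Fintype ι] [NormedAddCommGroup E]
    [NormedSpace ℝ E] {s : ι → E → ℝ} {s' : ι → E →L[ℝ] ℝ} {p : E}
    (hs : ∀ k, HasFDerivAt (s k) (s' k) p) (j : ι) :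
    HasFDerivAt (fun z => Real.log (Real.exp (s j z) / ∑ k, Real.exp (s k z)))
      (s' j - ∑ k, (Real.exp (s k p) / ∑ k', Real.exp (s k' p)) • s' k) p := by
  have hpos : ∀ z, 0 < ∑ k, Real.exp (s k z) := fun z =>
    Finset.sum_pos (fun k _ => Real.exp_pos _) ⟨j, Finset.mem_univ j⟩
  have hlog : (fun z => Real.log (Real.exp (s j z) / ∑ k, Real.exp (s k z))) =
      fun z => s j z - Real.log (∑ k, Real.exp (s k z)) := by
    funext z
    rw [Real.log_div (Real.exp_ne_zero _) (hpos z).ne', Real.log_exp]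
  have hsum := (HasFDerivAt.fun_sum fun k _ => (hs k).exp).log (hpos p).ne'
  rw [hlog]
  refine ((hs j).fun_sub hsum).congr_fderiv ?_
  simp only [Finset.smul_sum, smul_smul, div_eq_inv_mul]

theorem hasFDerivAt_neg_norm_sub_update_sq_div {ι F : Type*} [DecidableEq ι]
    [NormedAddCommGroup F] [InnerProductSpace ℝ F] (τ : ℝ) (u : F) (y : ι → F) (i k : ι) :
    HasFDerivAt (fun z => -‖u - Function.update y i z k‖ ^ 2 / τ)
      (if k = i then (2 / τ) • innerSL ℝ (u - y i) else 0) (y i) := by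
  by_cases hk : k = i
  · subst hk
    simp only [Function.update_self, if_true, div_eq_mul_inv]
    refine ((((hasFDerivAt_id (y k)).const_sub u).norm_sq.fun_neg).mul_const τ⁻¹).congr_fderiv ?_
    ext w
    simp only [id_eq, map_sub, ContinuousLinearMap.comp_neg, ContinuousLinearMap.comp_id, neg_sub,
      smul_neg, neg_apply, smul_apply, sub_apply, coe_innerSL_apply, nsmul_eq_mul, smul_eq_mul]
    ring
  · simp only [Function.update_of_ne hk, if_neg hk]
    exact hasFDerivAt_const _ _

section ContrastiveLoss

variable {d N : ℕ}

local notation "E" => EuclideanSpace ℝ (Fin d)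

theorem Qy_eq_Qx_swap (τ : ℝ) (x y : Fin N → E) (i j : Fin N) :
    Qy τ x y i j = Qx τ y x j i := by
  simp only [Qx, Qy, norm_sub_rev (y j)]

theorem contrastiveLoss_comm (τ : ℝ) (x y : Fin N → E) :
    contrastiveLoss τ x y = contrastiveLoss τ y x := by
  simp only [contrastiveLoss, Qy_eq_Qx_swap τ x y, Qy_eq_Qx_swap τ y x, add_comm]

theorem sum_Qy_left (τ : ℝ) (x y : Fin N → E) (j : Fin N) : ∑ k, Qy τ x y k j = 1 := by
  simp only [Qy, ← Finset.sum_div]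
  exact div_self (Finset.sum_pos (fun k _ => Real.exp_pos _) ⟨j, Finset.mem_univ j⟩).ne'

theorem hasGradientAt_contrastiveLoss_update_right (τ : ℝ) (x y : Fin N → E) (i : Fin N) :
    HasGradientAt (fun z => contrastiveLoss τ x (Function.update y i z))
      ((2 / (N * τ)) • (∑ k, (Qx τ x y k i + Qy τ x y k i) • (x k - y i) - (2 : ℝ) • (x i - y i)))
      (y i) := by
  set g : Fin N → Fin N → E →L[ℝ] ℝ :=
    fun j k => if k = i then (2 / τ) • innerSL ℝ (x j - y i) else 0
  have hlogit : ∀ j k,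
      HasFDerivAt (fun z => -‖x j - Function.update y i z k‖ ^ 2 / τ) (g j k) (y i) :=
    fun j k => hasFDerivAt_neg_norm_sub_update_sq_div τ (x j) y i k
  have hQx : ∀ j, HasFDerivAt (fun z => Real.log (Qx τ x (Function.update y i z) j j))
      (g j j - ∑ k, Qx τ x y j k • g j k) (y i) := fun j => by
    have h := HasFDerivAt.log_exp_div_sum_exp (hlogit j) j
    simp only [Function.update_eq_self] at h
    exact h
  have hQy : ∀ j, HasFDerivAt (fun z => Real.log (Qy τ x (Function.update y i z) j j))
      (g j j - ∑ k, Qy τ x y k j • g k j) (y i) := fun j => by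
    have h := HasFDerivAt.log_exp_div_sum_exp (fun k => hlogit k j) j
    simp only [Function.update_eq_self] at h
    exact h
  rw [hasGradientAt_iff_hasFDerivAt]
  refine ((HasFDerivAt.fun_sum (u := Finset.univ) fun j _ => (hQx j).add (hQy j)).const_mul
    (-(1 / (N : ℝ)))).congr_fderiv ?_
  ext w
  have hgw : ∀ j k, g j k w = if k = i then 2 / τ * ⟪x j - y i, w⟫ else 0 := fun j k => by
    split_ifs <;> simp [g, *, real_inner_comm, inner_sub_right]
  simp only [smul_apply, sum_apply, add_apply, sub_apply, hgw, smul_eq_mul, mul_ite, mul_zero,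
    Finset.sum_ite_eq', Finset.mem_univ, if_true, Finset.sum_add_distrib, Finset.sum_sub_distrib,
    Finset.sum_ite_irrel, Finset.sum_const_zero]
  rw [InnerProductSpace.toDual_apply_apply, real_inner_smul_left, inner_sub_left (∑ k, _),
    sum_inner, real_inner_smul_left]
  simp only [real_inner_smul_left, add_mul, Finset.sum_add_distrib, mul_left_comm _ (2 / τ),
    ← Finset.mul_sum]
  field_simp
  ring

theorem inner_gradient_contrastiveLoss_update_right_eq_zero {τ : ℝ} {x y : Fin N → E} {v : E}
    {a b : ℝ} (hva : ∀ k, ⟪v, x k⟫ = a) (hvb : ∀ k, ⟪v, y k⟫ = b) {i : Fin N}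
    (hQx : ∑ k, Qx τ x y k i = 1) :
    ⟪v, gradient (fun z => contrastiveLoss τ x (Function.update y i z)) (y i)⟫ = 0 := by
  have hproj : ∀ k, ⟪v, x k - y i⟫ = a - b := fun k => by rw [inner_sub_right, hva, hvb]
  rw [(hasGradientAt_contrastiveLoss_update_right τ x y i).gradient, real_inner_smul_right,
    inner_sub_right, inner_sum, real_inner_smul_right]
  simp only [real_inner_smul_right, hproj, ← Finset.sum_mul, Finset.sum_add_distrib, hQx,
    sum_Qy_left]
  ring

end ContrastiveLoss

theorem gradient_orthogonal_to_constant_direction_general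
    (d N : ℕ) (τ : ℝ)
    (x y : Fin N → EuclideanSpace ℝ (Fin d))
    (v : EuclideanSpace ℝ (Fin d)) (a b : ℝ)
    (hva : ∀ k, ⟪v, x k⟫ = a) (hvb : ∀ k, ⟪v, y k⟫ = b)
    (hQx : ∀ i, ∑ k, Qx τ x y k i = 1)
    (hQy : ∀ i, ∑ k, Qy τ x y i k = 1) :
    ∀ i, ⟪v, gradient (fun z => contrastiveLoss τ x (Function.update y i z)) (y i)⟫ = 0 ∧
      ⟪v, gradient (fun z => contrastiveLoss τ (Function.update x i z) y) (x i)⟫ = 0 := by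
  intro i
  refine ⟨inner_gradient_contrastiveLoss_update_right_eq_zero hva hvb (hQx i), ?_⟩
  have hswap : (fun z => contrastiveLoss τ (Function.update x i z) y) =
      fun z => contrastiveLoss τ y (Function.update x i z) :=
    funext fun z => contrastiveLoss_comm τ _ y
  have hQx_swap : ∑ k, Qx τ y x k i = 1 := by simpa only [Qy_eq_Qx_swap] using hQy i
  rw [hswap]
  exact inner_gradient_contrastiveLoss_update_right_eq_zero hvb hva hQx_swap

theorem gradient_orthogonal_to_constant_direction
    (d N : ℕ) (hd : 0 < d) (hN : 0 < N) (τ : ℝ) (hτ : 0 < τ)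
    (x y : Fin N → EuclideanSpace ℝ (Fin d))
    (v : EuclideanSpace ℝ (Fin d)) (a b : ℝ)
    (hva : ∀ k, ⟪v, x k⟫ = a) (hvb : ∀ k, ⟪v, y k⟫ = b)
    (hQx : ∀ i, ∑ k, Qx τ x y k i = 1)
    (hQy : ∀ i, ∑ k, Qy τ x y i k = 1) :
    ∀ i, ⟪v, gradient (fun z => contrastiveLoss τ x (Function.update y i z)) (y i)⟫ = 0 ∧
      ⟪v, gradient (fun z => contrastiveLoss τ (Function.update x i z) y) (x i)⟫ = 0 :=
  gradient_orthogonal_to_constant_direction_general d N τ x y v a b hva hvb hQx hQy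
end

section
/- For all x_1, x_2, y ∈ EuclideanSpace ℝ (Fin d), the function x_1 ↦ L(x_1, x_2, y) (with x_2, y fixed) is differentiable, and its gradient equals ∇_{x_1}L = 2·(1 − Q_1)·(x_1 − y), where Q_1 = exp(−D(x_1,y)) / (exp(−D(x_1,y)) + exp(−D(x_2,y))). Moreover the scalar coefficient satisfies 0 < 2·(1 − Q_1) < 2, so the gradient with respect to each image embedding is a positive multiple of (x_1 − y), pointing away from alignment with y. -/
/-!
The loss depends on `x₁` only through `t = D(x₁,y)`, as `t + log (exp (-t) + exp (-D(x₂,y)))`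
plus constants. This has derivative `1 - Q₁` in `t`, a softmax complement and hence in `(0,1)`,
and the chain rule with `∇ ‖x₁ - y‖² = 2 (x₁ - y)` gives the gradient.
-/

open RealInnerProductSpace

/-- Squared Euclidean distance `D(u,v) = ‖u − v‖²`. -/
noncomputable def sqDist {d : ℕ} (u v : EuclideanSpace ℝ (Fin d)) : ℝ := ‖u - v‖ ^ 2

/-- Two-image one-caption contrastive loss
`L(x₁, x₂, y) = log 2 + D(x₁,y) + D(x₂,y) + log (exp (−D(x₁,y)) + exp (−D(x₂,y)))`. -/
noncomputable def twoImageLoss {d : ℕ} (x₁ x₂ y : EuclideanSpace ℝ (Fin d)) : ℝ :=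
  Real.log 2 + sqDist x₁ y + sqDist x₂ y +
    Real.log (Real.exp (-sqDist x₁ y) + Real.exp (-sqDist x₂ y))

section Gradient

variable {F : Type*} [NormedAddCommGroup F] [InnerProductSpace ℝ F] [CompleteSpace F]

theorem HasDerivAt.comp_hasGradientAt {φ : ℝ → ℝ} {φ' : ℝ} {g : F → ℝ} {g' x : F}
    (hφ : HasDerivAt φ φ' (g x)) (hg : HasGradientAt g g' x) :
    HasGradientAt (φ ∘ g) (φ' • g') x := by
  rw [hasGradientAt_iff_hasFDerivAt] at hg ⊢
  refine (hφ.comp_hasFDerivAt x hg).congr_fderiv ?_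
  ext v
  simp

theorem hasGradientAt_norm_sub_sq (x y : F) :
    HasGradientAt (fun z => ‖z - y‖ ^ 2) ((2 : ℝ) • (x - y)) x := by
  rw [hasGradientAt_iff_hasFDerivAt]
  refine ((hasFDerivAt_id x).sub_const y).norm_sq.congr_fderiv ?_
  ext v
  simp

end Gradient

theorem hasDerivAt_add_log_exp_neg_add (c d : ℝ) {b : ℝ} (hb : 0 < b) (t : ℝ) :
    HasDerivAt (fun s => c + s + d + Real.log (Real.exp (-s) + b))
      (1 - Real.exp (-t) / (Real.exp (-t) + b)) t := by
  have hsum : HasDerivAt (fun s => Real.exp (-s) + b) (-Real.exp (-t)) t := by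
    simpa using (hasDerivAt_neg t).exp.add_const b
  have hlog := hsum.log (by positivity)
  refine ((((hasDerivAt_id t).const_add c).add_const d).add hlog).congr_deriv ?_
  ring

theorem div_add_mem_Ioo {p q : ℝ} (hp : 0 < p) (hq : 0 < q) : p / (p + q) ∈ Set.Ioo 0 1 :=
  ⟨by positivity, (div_lt_one (by positivity)).2 (by linarith)⟩

theorem twoImageLoss_gradient_x₁
    (d : ℕ) (x₁ x₂ y : EuclideanSpace ℝ (Fin d)) (Q₁ : ℝ)
    (hQ₁ : Q₁ = Real.exp (-sqDist x₁ y) /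
      (Real.exp (-sqDist x₁ y) + Real.exp (-sqDist x₂ y))) :
    HasGradientAt (fun z => twoImageLoss z x₂ y) ((2 * (1 - Q₁)) • (x₁ - y)) x₁ ∧
    0 < 2 * (1 - Q₁) ∧ 2 * (1 - Q₁) < 2 := by
  obtain ⟨hQ_pos, hQ_lt_one⟩ : Q₁ ∈ Set.Ioo 0 1 :=
    hQ₁ ▸ div_add_mem_Ioo (Real.exp_pos _) (Real.exp_pos _)
  refine ⟨?_, by linarith, by linarith⟩
  have hφ := hasDerivAt_add_log_exp_neg_add (Real.log 2) (sqDist x₂ y)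
    (Real.exp_pos (-sqDist x₂ y)) (sqDist x₁ y)
  rw [← hQ₁] at hφ
  rw [mul_comm, mul_smul]
  exact hφ.comp_hasGradientAt (g := (sqDist · y)) (hasGradientAt_norm_sub_sq x₁ y)
end
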